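/- arXiv:2405.02572 — 8 statements merged into one kernel-verified Lean document; each statement's English description precedes it below -/
import Mathlib

section
/- Assume the fiberwise zero-mean condition. Then for every baseline b : F → ℝ, E[g(b)] = ∑_{ω} p(ω) · Q(ω) • z(ω). In particular E[g(b)] = E[g(b')] for any two baselines b, b' : F → ℝ, so subtracting a baseline that is constant on the fibers of φ does not change the expectation of the off-policy policy gradient estimator. -/
open Finset

theorem Finset.sum_smul_comp_eq_zero_of_sum_fiberwise_eq_zero {ι κ R M : Type*}
    [Fintype κ] [DecidableEq κ] [Semiring R] [AddCommMonoid M] [Module R M]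
    (s : Finset ι) (g : ι → κ) (c : κ → R) (v : ι → M)
    (h : ∀ k, ∑ i ∈ s with g i = k, v i = 0) :
    ∑ i ∈ s, c (g i) • v i = 0 := by
  rw [← sum_fiberwise s g]
  refine sum_eq_zero fun k _ => ?_
  calc ∑ i ∈ s with g i = k, c (g i) • v i
      = ∑ i ∈ s with g i = k, c k • v i :=
        sum_congr rfl fun i hi => by rw [(mem_filter.1 hi).2]
    _ = 0 := by rw [← smul_sum, h k, smul_zero]

theorem smul_sub_smul_eq_mul_smul_sub {R M : Type*} [CommRing R] [AddCommGroup M] [Module R M]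
    (p q b : R) (z : M) :
    p • ((q - b) • z) = (p * q) • z - b • (p • z) := by
  rw [sub_smul, smul_sub, mul_smul, smul_comm b p]

theorem offpolicy_baseline_expectation_invariant_general
    {Ω : Type*} [Fintype Ω]
    {E : Type*} [NormedAddCommGroup E] [InnerProductSpace ℝ E]
    {F : Type*} [Fintype F] [DecidableEq F]
    (p : Ω → ℝ)
    (z : Ω → E) (Q : Ω → ℝ) (φ : Ω → F)
    (hzm : ∀ f : F, ∑ ω ∈ univ.filter (fun ω => φ ω = f), p ω • z ω = 0) :
    (∀ b : F → ℝ,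
        ∑ ω, p ω • ((Q ω - b (φ ω)) • z ω) = ∑ ω, (p ω * Q ω) • z ω)
    ∧ (∀ b b' : F → ℝ,
        ∑ ω, p ω • ((Q ω - b (φ ω)) • z ω)
          = ∑ ω, p ω • ((Q ω - b' (φ ω)) • z ω)) := by
  have unbiased : ∀ b : F → ℝ,
      ∑ ω, p ω • ((Q ω - b (φ ω)) • z ω) = ∑ ω, (p ω * Q ω) • z ω := fun b => by
    have baseline_term_vanishes : ∑ ω, b (φ ω) • (p ω • z ω) = 0 :=
      sum_smul_comp_eq_zero_of_sum_fiberwise_eq_zero _ φ b _ hzm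
    simp only [smul_sub_smul_eq_mul_smul_sub, sum_sub_distrib, baseline_term_vanishes, sub_zero]
  exact ⟨unbiased, fun b b' => (unbiased b).trans (unbiased b').symm⟩

/-- Remark 1, Eq. (16): under the fiberwise zero-mean condition, subtracting a
baseline that is constant on the fibers of `φ` does not change the expectation
of the off-policy policy gradient estimator:
`E[g(b)] = ∑ ω, p ω • Q ω • z ω` for every baseline `b`, and in particular
`E[g(b)] = E[g(b')]` for any two baselines. -/
theorem offpolicy_baseline_expectation_invariant
    {Ω : Type*} [Fintype Ω] [Nonempty Ω]
    {E : Type*} [NormedAddCommGroup E] [InnerProductSpace ℝ E] [FiniteDimensional ℝ E]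
    {F : Type*} [Fintype F] [DecidableEq F]
    (p : Ω → ℝ) (hp0 : ∀ ω, 0 ≤ p ω) (hp1 : ∑ ω, p ω = 1)
    (z : Ω → E) (Q : Ω → ℝ) (φ : Ω → F)
    (hzm : ∀ f : F, ∑ ω ∈ univ.filter (fun ω => φ ω = f), p ω • z ω = 0) :
    (∀ b : F → ℝ,
        ∑ ω, p ω • ((Q ω - b (φ ω)) • z ω) = ∑ ω, (p ω * Q ω) • z ω)
    ∧ (∀ b b' : F → ℝ,
        ∑ ω, p ω • ((Q ω - b (φ ω)) • z ω)
          = ∑ ω, p ω • ((Q ω - b' (φ ω)) • z ω)) :=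
  offpolicy_baseline_expectation_invariant_general p z Q φ hzm
end

section
/- Assume the fiberwise zero-mean condition. Then for every baseline b : F → ℝ, Var[g(b)] = ∑_{f ∈ F} ( b(f)² · W(f) − 2·b(f) · U(f) ) + C, where C = ∑_{ω} p(ω)·‖z(ω)‖²·Q(ω)² − ‖∑_{ω} p(ω)·Q(ω) • z(ω)‖² is a constant independent of the baseline b. -/
open Finset

/-- Eq. (35): quadratic-in-the-baseline expansion of the variance of the
off-policy policy gradient estimator,
`Var[g(b)] = ∑ f, (b(f)² W(f) − 2 b(f) U(f)) + C`,
where `C` is independent of the baseline `b`. -/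
theorem offpolicy_variance_quadratic_in_baseline
    {Ω : Type*} [Fintype Ω] [Nonempty Ω]
    {E : Type*} [NormedAddCommGroup E] [InnerProductSpace ℝ E] [FiniteDimensional ℝ E]
    {F : Type*} [Fintype F] [DecidableEq F]
    (p : Ω → ℝ) (hp0 : ∀ ω, 0 ≤ p ω) (hp1 : ∑ ω, p ω = 1)
    (z : Ω → E) (Q : Ω → ℝ) (φ : Ω → F)
    (hzm : ∀ f : F, ∑ ω ∈ univ.filter (fun ω => φ ω = f), p ω • z ω = 0)
    (W U : F → ℝ)
    (hW : ∀ f, W f = ∑ ω ∈ univ.filter (fun ω => φ ω = f), p ω * ‖z ω‖ ^ 2)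
    (hU : ∀ f, U f = ∑ ω ∈ univ.filter (fun ω => φ ω = f), p ω * ‖z ω‖ ^ 2 * Q ω) :
    ∀ b : F → ℝ,
      (∑ ω, p ω * ‖(Q ω - b (φ ω)) • z ω‖ ^ 2)
          - ‖∑ ω, p ω • ((Q ω - b (φ ω)) • z ω)‖ ^ 2
        = (∑ f, (b f ^ 2 * W f - 2 * b f * U f))
          + ((∑ ω, p ω * ‖z ω‖ ^ 2 * Q ω ^ 2)
              - ‖∑ ω, (p ω * Q ω) • z ω‖ ^ 2) := by

  intro b
  have hmean : (∑ ω, p ω • ((Q ω - b (φ ω)) • z ω)) = ∑ ω, (p ω * Q ω) • z ω := by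
    have h0 : (∑ ω, b (φ ω) • (p ω • z ω)) = 0 := by
      rw [← Finset.sum_fiberwise (univ) φ (fun ω => b (φ ω) • (p ω • z ω))]
      refine Finset.sum_eq_zero fun f _ => ?_
      have : (∑ ω ∈ univ.filter (fun ω => φ ω = f), b (φ ω) • (p ω • z ω))
          = b f • ∑ ω ∈ univ.filter (fun ω => φ ω = f), p ω • z ω := by
        rw [Finset.smul_sum]
        refine Finset.sum_congr rfl fun ω hω => ?_
        simp only [Finset.mem_filter] at hω
        rw [hω.2]
      rw [this, hzm f, smul_zero]
    calc (∑ ω, p ω • ((Q ω - b (φ ω)) • z ω))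
        = ∑ ω, ((p ω * Q ω) • z ω - b (φ ω) • (p ω • z ω)) := by
          refine Finset.sum_congr rfl fun ω _ => ?_
          simp only [smul_sub, smul_smul, sub_smul]
          rw [mul_comm (b (φ ω)) (p ω)]
      _ = ∑ ω, (p ω * Q ω) • z ω := by
          rw [Finset.sum_sub_distrib, h0, sub_zero]
  rw [hmean]
  have hsec : (∑ ω, p ω * ‖(Q ω - b (φ ω)) • z ω‖ ^ 2)
      = (∑ f, (b f ^ 2 * W f - 2 * b f * U f)) + ∑ ω, p ω * ‖z ω‖ ^ 2 * Q ω ^ 2 := by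
    have : ∀ ω, p ω * ‖(Q ω - b (φ ω)) • z ω‖ ^ 2
        = (b (φ ω) ^ 2 * (p ω * ‖z ω‖ ^ 2) - 2 * b (φ ω) * (p ω * ‖z ω‖ ^ 2 * Q ω))
          + p ω * ‖z ω‖ ^ 2 * Q ω ^ 2 := by
      intro ω
      rw [norm_smul]
      simp [Real.norm_eq_abs, mul_pow, sq_abs]
      ring
    rw [Finset.sum_congr rfl fun ω _ => this ω, Finset.sum_add_distrib]
    congr 1
    rw [← Finset.sum_fiberwise (univ) φ
      (fun ω => b (φ ω) ^ 2 * (p ω * ‖z ω‖ ^ 2) - 2 * b (φ ω) * (p ω * ‖z ω‖ ^ 2 * Q ω))]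
    refine Finset.sum_congr rfl fun f _ => ?_
    rw [hW, hU, Finset.mul_sum, Finset.mul_sum, ← Finset.sum_sub_distrib]
    refine Finset.sum_congr rfl fun ω hω => ?_
    simp only [Finset.mem_filter] at hω
    rw [hω.2]
  rw [hsec]
  have hz : (∑ ω, (p ω * Q ω) • z ω) = ∑ ω, (p ω * Q ω) • z ω := rfl
  ring
end

section
/- Assume the fiberwise zero-mean condition and that W(f) > 0 for every f ∈ F. Define the optimal action-dependent baseline b* : F → ℝ by b*(f) = U(f)/W(f). Then for every baseline b : F → ℝ, Var[g(b*)] ≤ Var[g(b)]; that is, b* minimizes the variance of the off-policy policy gradient estimator over all baselines that are constant on the fibers of φ. -/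
open Finset

/-- Theorem 1 (per action dimension): the baseline `b*(f) = U(f)/W(f)`
minimizes the variance of the off-policy policy gradient estimator over all
baselines that are constant on the fibers of `φ`. -/
theorem offpolicy_optimal_action_dependent_baseline
    {Ω : Type*} [Fintype Ω] [Nonempty Ω]
    {E : Type*} [NormedAddCommGroup E] [InnerProductSpace ℝ E] [FiniteDimensional ℝ E]
    {F : Type*} [Fintype F] [DecidableEq F]
    (p : Ω → ℝ) (hp0 : ∀ ω, 0 ≤ p ω) (hp1 : ∑ ω, p ω = 1)
    (z : Ω → E) (Q : Ω → ℝ) (φ : Ω → F)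
    (hzm : ∀ f : F, ∑ ω ∈ univ.filter (fun ω => φ ω = f), p ω • z ω = 0)
    (W U : F → ℝ)
    (hW : ∀ f, W f = ∑ ω ∈ univ.filter (fun ω => φ ω = f), p ω * ‖z ω‖ ^ 2)
    (hU : ∀ f, U f = ∑ ω ∈ univ.filter (fun ω => φ ω = f), p ω * ‖z ω‖ ^ 2 * Q ω)
    (hWpos : ∀ f, 0 < W f)
    (bstar : F → ℝ) (hbstar : ∀ f, bstar f = U f / W f) :
    ∀ b : F → ℝ,
      (∑ ω, p ω * ‖(Q ω - bstar (φ ω)) • z ω‖ ^ 2)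
          - ‖∑ ω, p ω • ((Q ω - bstar (φ ω)) • z ω)‖ ^ 2
        ≤ (∑ ω, p ω * ‖(Q ω - b (φ ω)) • z ω‖ ^ 2)
          - ‖∑ ω, p ω • ((Q ω - b (φ ω)) • z ω)‖ ^ 2 := by
  intro b
  -- The mean is independent of the baseline.
  have hmean : ∀ c : F → ℝ,
      ∑ ω, p ω • ((Q ω - c (φ ω)) • z ω) = ∑ ω, p ω • (Q ω • z ω) := by
    intro c
    have hterm : ∀ ω, p ω • ((Q ω - c (φ ω)) • z ω)
        = p ω • (Q ω • z ω) - c (φ ω) • (p ω • z ω) := by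
      intro ω
      rw [sub_smul, smul_sub, smul_comm (c (φ ω))]
    simp_rw [hterm, Finset.sum_sub_distrib]
    have hzero : ∑ ω, c (φ ω) • (p ω • z ω) = 0 := by
      rw [← Finset.sum_fiberwise univ φ (fun ω => c (φ ω) • (p ω • z ω))]
      refine Finset.sum_eq_zero fun f _ => ?_
      have : ∑ ω ∈ univ.filter (fun ω => φ ω = f), c (φ ω) • (p ω • z ω)
          = c f • ∑ ω ∈ univ.filter (fun ω => φ ω = f), p ω • z ω := by
        rw [Finset.smul_sum]
        refine Finset.sum_congr rfl fun ω hω => ?_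
        rw [(Finset.mem_filter.mp hω).2]
      rw [this, hzm, smul_zero]
    rw [hzero, sub_zero]
  rw [hmean bstar, hmean b]
  have hsq : ∀ (c : F → ℝ) (ω : Ω),
      p ω * ‖(Q ω - c (φ ω)) • z ω‖ ^ 2
        = p ω * ‖z ω‖ ^ 2 * (Q ω - c (φ ω)) ^ 2 := by
    intro c ω
    rw [norm_smul, mul_pow, Real.norm_eq_abs, sq_abs]
    ring
  have key : (∑ ω, p ω * ‖(Q ω - bstar (φ ω)) • z ω‖ ^ 2)
      ≤ ∑ ω, p ω * ‖(Q ω - b (φ ω)) • z ω‖ ^ 2 := by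
    simp_rw [hsq]
    rw [← Finset.sum_fiberwise univ φ
      (fun ω => p ω * ‖z ω‖ ^ 2 * (Q ω - bstar (φ ω)) ^ 2),
      ← Finset.sum_fiberwise univ φ
      (fun ω => p ω * ‖z ω‖ ^ 2 * (Q ω - b (φ ω)) ^ 2)]
    refine Finset.sum_le_sum fun f _ => ?_
    have hfib : ∀ c : F → ℝ,
        ∑ ω ∈ univ.filter (fun ω => φ ω = f), p ω * ‖z ω‖ ^ 2 * (Q ω - c (φ ω)) ^ 2
          = (∑ ω ∈ univ.filter (fun ω => φ ω = f), p ω * ‖z ω‖ ^ 2 * Q ω ^ 2)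
            - 2 * c f * U f + c f ^ 2 * W f := by
      intro c
      rw [hU, hW, Finset.mul_sum, Finset.mul_sum, ← Finset.sum_sub_distrib,
        ← Finset.sum_add_distrib]
      refine Finset.sum_congr rfl fun ω hω => ?_
      rw [(Finset.mem_filter.mp hω).2]
      ring
    rw [hfib bstar, hfib b]
    have hUW : U f = bstar f * W f := by
      rw [hbstar, div_mul_cancel₀ _ (hWpos f).ne']
    have h0 : 0 ≤ W f * (b f - bstar f) ^ 2 :=
      mul_nonneg (hWpos f).le (sq_nonneg _)
    rw [hUW]
    nlinarith [h0]
  linarith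
end

section
/- Let Ω be a finite nonempty type equipped with a probability mass function p : Ω → ℝ, let E be a finite-dimensional real inner product space, and let m be a natural number. For each i : Fin m, let zᵢ : Ω → E, let Fᵢ be a finite type with a fiber map φᵢ : Ω → Fᵢ, and assume: (i) pointwise orthogonality ⟪zᵢ(ω), zⱼ(ω)⟫ = 0 for all i ≠ j and all ω; (ii) for every i and every f ∈ Fᵢ, ∑_{ω with φᵢ(ω)=f} p(ω) • zᵢ(ω) = 0; (iii) Wᵢ(f) := ∑_{ω with φᵢ(ω)=f} p(ω)‖zᵢ(ω)‖² > 0 for every i and f. Let Q : Ω → ℝ, and for a family of baselines b = (bᵢ : Fᵢ → ℝ)_{i} define G(b) : Ω → E by G(b)(ω) = ∑_{i} (Q(ω) − bᵢ(φᵢ(ω))) • zᵢ(ω). Define b*ᵢ(f) = Uᵢ(f)/Wᵢ(f) where Uᵢ(f) = ∑_{ω with φᵢ(ω)=f} p(ω)‖zᵢ(ω)‖²·Q(ω). Then for every family of baselines b, Var[G(b*)] ≤ Var[G(b)]. -/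
open Finset RealInnerProductSpace

lemma quad_min (W U c : ℝ) (hW : 0 < W) :
    2 * (U / W) * U - (U / W) ^ 2 * W ≥ 2 * c * U - c ^ 2 * W := by
  have h1 : 2 * (U / W) * U - (U / W) ^ 2 * W = U ^ 2 / W := by
    field_simp; ring
  rw [h1, ge_iff_le, ← sub_nonneg]
  have h2 : U ^ 2 / W - (2 * c * U - c ^ 2 * W) = (c * W - U) ^ 2 / W := by
    field_simp; ring
  rw [h2]
  positivity

lemma norm_sq_sum_orth {E : Type*} [NormedAddCommGroup E] [InnerProductSpace ℝ E]
    {m : ℕ} (v : Fin m → E) (h : ∀ i j, i ≠ j → ⟪v i, v j⟫ = 0) :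
    ‖∑ i, v i‖ ^ 2 = ∑ i, ‖v i‖ ^ 2 := by
  have : ⟪∑ i, v i, ∑ j, v j⟫ = ∑ i, ⟪v i, v i⟫ := by
    rw [inner_sum]
    refine Finset.sum_congr rfl fun j _ => ?_
    rw [sum_inner]
    refine Finset.sum_eq_single j (fun i _ hij => h i j hij) (by simp)
  simpa [real_inner_self_eq_norm_sq] using this


/-- Theorem 1 (Optimal Off-Policy Action-Dependent Baseline), full statement:
for the estimator `G(b)(ω) = ∑ i, (Q ω − bᵢ(φᵢ ω)) • zᵢ ω`, under pointwise
orthogonality of the per-dimension scores, the fiberwise zero-mean condition,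
and positivity of the fiberwise second moments `Wᵢ`, the family of baselines
`b*ᵢ(f) = Uᵢ(f)/Wᵢ(f)` minimizes the variance `Var[G(b)]` over all families of
action-dependent baselines. -/
theorem offpolicy_optimal_action_dependent_baseline_full
    {Ω : Type*} [Fintype Ω] [Nonempty Ω]
    {E : Type*} [NormedAddCommGroup E] [InnerProductSpace ℝ E] [FiniteDimensional ℝ E]
    {m : ℕ} {F : Fin m → Type*} [∀ i, Fintype (F i)] [∀ i, DecidableEq (F i)]
    (p : Ω → ℝ) (hp0 : ∀ ω, 0 ≤ p ω) (hp1 : ∑ ω, p ω = 1)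
    (z : Fin m → Ω → E) (Q : Ω → ℝ) (φ : ∀ i, Ω → F i)
    (horth : ∀ i j, i ≠ j → ∀ ω, ⟪z i ω, z j ω⟫ = 0)
    (hzm : ∀ i (f : F i), ∑ ω ∈ univ.filter (fun ω => φ i ω = f), p ω • z i ω = 0)
    (W U : ∀ i, F i → ℝ)
    (hW : ∀ i f, W i f = ∑ ω ∈ univ.filter (fun ω => φ i ω = f), p ω * ‖z i ω‖ ^ 2)
    (hU : ∀ i f, U i f = ∑ ω ∈ univ.filter (fun ω => φ i ω = f), p ω * ‖z i ω‖ ^ 2 * Q ω)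
    (hWpos : ∀ i f, 0 < W i f)
    (bstar : ∀ i, F i → ℝ) (hbstar : ∀ i f, bstar i f = U i f / W i f) :
    ∀ b : ∀ i, F i → ℝ,
      (∑ ω, p ω * ‖∑ i, (Q ω - bstar i (φ i ω)) • z i ω‖ ^ 2)
          - ‖∑ ω, p ω • ∑ i, (Q ω - bstar i (φ i ω)) • z i ω‖ ^ 2
        ≤ (∑ ω, p ω * ‖∑ i, (Q ω - b i (φ i ω)) • z i ω‖ ^ 2)
          - ‖∑ ω, p ω • ∑ i, (Q ω - b i (φ i ω)) • z i ω‖ ^ 2 := by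
  intro b
  -- The mean does not depend on the baseline
  have mean_eq : ∀ c : ∀ i, F i → ℝ,
      (∑ ω, p ω • ∑ i, (Q ω - c i (φ i ω)) • z i ω)
        = ∑ i, ∑ ω, (p ω * Q ω) • z i ω := by
    intro c
    have h1 : ∀ ω, p ω • ∑ i, (Q ω - c i (φ i ω)) • z i ω
        = ∑ i, ((p ω * Q ω) • z i ω - c i (φ i ω) • (p ω • z i ω)) := by
      intro ω
      rw [Finset.smul_sum]
      refine Finset.sum_congr rfl fun i _ => ?_
      rw [smul_smul, smul_smul, mul_sub, sub_smul, mul_comm (c i (φ i ω)) (p ω)]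
    simp_rw [h1]
    rw [Finset.sum_comm]
    rw [show (∑ i, ∑ ω, ((p ω * Q ω) • z i ω - c i (φ i ω) • (p ω • z i ω)))
        = ∑ i, ((∑ ω, (p ω * Q ω) • z i ω) - ∑ ω, c i (φ i ω) • (p ω • z i ω)) by
      simp [Finset.sum_sub_distrib]]
    have h2 : ∀ i, (∑ ω, c i (φ i ω) • (p ω • z i ω)) = 0 := by
      intro i
      rw [← Finset.sum_fiberwise univ (φ i) (fun ω => c i (φ i ω) • (p ω • z i ω))]
      refine Finset.sum_eq_zero fun f _ => ?_
      have : ∀ ω ∈ univ.filter (fun ω => φ i ω = f),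
          c i (φ i ω) • (p ω • z i ω) = c i f • (p ω • z i ω) := by
        intro ω hω
        rw [Finset.mem_filter] at hω
        rw [hω.2]
      rw [Finset.sum_congr rfl this, ← Finset.smul_sum, hzm, smul_zero]
    simp [h2]
  -- second moment expansion
  have sm : ∀ c : ∀ i, F i → ℝ,
      (∑ ω, p ω * ‖∑ i, (Q ω - c i (φ i ω)) • z i ω‖ ^ 2)
        = ∑ i, ∑ f, ((∑ ω ∈ univ.filter (fun ω => φ i ω = f),
            p ω * ‖z i ω‖ ^ 2 * Q ω ^ 2)
            - 2 * c i f * U i f + (c i f) ^ 2 * W i f) := by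
    intro c
    have h1 : ∀ ω, ‖∑ i, (Q ω - c i (φ i ω)) • z i ω‖ ^ 2
        = ∑ i, (Q ω - c i (φ i ω)) ^ 2 * ‖z i ω‖ ^ 2 := by
      intro ω
      rw [norm_sq_sum_orth _ (fun i j hij => by
        rw [inner_smul_left, inner_smul_right, horth i j hij ω]; ring)]
      refine Finset.sum_congr rfl fun i _ => ?_
      rw [norm_smul, mul_pow, Real.norm_eq_abs, sq_abs]
    simp_rw [h1, Finset.mul_sum]
    rw [Finset.sum_comm]
    refine Finset.sum_congr rfl fun i _ => ?_
    rw [← Finset.sum_fiberwise univ (φ i)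
      (fun ω => p ω * ((Q ω - c i (φ i ω)) ^ 2 * ‖z i ω‖ ^ 2))]
    refine Finset.sum_congr rfl fun f _ => ?_
    have h2 : ∀ ω ∈ univ.filter (fun ω => φ i ω = f),
        p ω * ((Q ω - c i (φ i ω)) ^ 2 * ‖z i ω‖ ^ 2)
          = p ω * ‖z i ω‖ ^ 2 * Q ω ^ 2
            - 2 * c i f * (p ω * ‖z i ω‖ ^ 2 * Q ω)
            + (c i f) ^ 2 * (p ω * ‖z i ω‖ ^ 2) := by
      intro ω hω
      rw [Finset.mem_filter] at hω
      rw [hω.2]; ring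
    rw [Finset.sum_congr rfl h2, Finset.sum_add_distrib, Finset.sum_sub_distrib,
      ← Finset.mul_sum, ← Finset.mul_sum, ← hU, ← hW]
  rw [mean_eq b, mean_eq bstar, sm b, sm bstar]
  have key : ∀ i f, -(2 * bstar i f * U i f) + (bstar i f) ^ 2 * W i f
      ≤ -(2 * b i f * U i f) + (b i f) ^ 2 * W i f := by
    intro i f
    have := quad_min (W i f) (U i f) (b i f) (hWpos i f)
    rw [hbstar]
    linarith
  have : (∑ i, ∑ f, ((∑ ω ∈ univ.filter (fun ω => φ i ω = f),
            p ω * ‖z i ω‖ ^ 2 * Q ω ^ 2)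
            - 2 * bstar i f * U i f + (bstar i f) ^ 2 * W i f))
      ≤ ∑ i, ∑ f, ((∑ ω ∈ univ.filter (fun ω => φ i ω = f),
            p ω * ‖z i ω‖ ^ 2 * Q ω ^ 2)
            - 2 * b i f * U i f + (b i f) ^ 2 * W i f) := by
    refine Finset.sum_le_sum fun i _ => Finset.sum_le_sum fun f _ => ?_
    have := key i f
    linarith
  linarith
end

section
/- Assume the fiberwise zero-mean condition and that W(f) > 0 for every f ∈ F, and let b*(f) = U(f)/W(f) be the optimal action-dependent baseline. Then Var[g(b*)] = −∑_{f ∈ F} b*(f)² · W(f) + C, where C = ∑_{ω} p(ω)·‖z(ω)‖²·Q(ω)² − ‖∑_{ω} p(ω)·Q(ω) • z(ω)‖². -/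
open Finset

/-- Eq. (43): closed-form variance of the off-policy policy gradient estimator
at the optimal action-dependent baseline `b*(f) = U(f)/W(f)`:
`Var[g(b*)] = −∑ f, b*(f)² W(f) + C`. -/
theorem offpolicy_variance_at_optimal_baseline
    {Ω : Type*} [Fintype Ω] [Nonempty Ω]
    {E : Type*} [NormedAddCommGroup E] [InnerProductSpace ℝ E] [FiniteDimensional ℝ E]
    {F : Type*} [Fintype F] [DecidableEq F]
    (p : Ω → ℝ) (hp0 : ∀ ω, 0 ≤ p ω) (hp1 : ∑ ω, p ω = 1)
    (z : Ω → E) (Q : Ω → ℝ) (φ : Ω → F)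
    (hzm : ∀ f : F, ∑ ω ∈ univ.filter (fun ω => φ ω = f), p ω • z ω = 0)
    (W U : F → ℝ)
    (hW : ∀ f, W f = ∑ ω ∈ univ.filter (fun ω => φ ω = f), p ω * ‖z ω‖ ^ 2)
    (hU : ∀ f, U f = ∑ ω ∈ univ.filter (fun ω => φ ω = f), p ω * ‖z ω‖ ^ 2 * Q ω)
    (hWpos : ∀ f, 0 < W f)
    (bstar : F → ℝ) (hbstar : ∀ f, bstar f = U f / W f) :
    (∑ ω, p ω * ‖(Q ω - bstar (φ ω)) • z ω‖ ^ 2)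
        - ‖∑ ω, p ω • ((Q ω - bstar (φ ω)) • z ω)‖ ^ 2
      = (-∑ f, bstar f ^ 2 * W f)
        + ((∑ ω, p ω * ‖z ω‖ ^ 2 * Q ω ^ 2)
            - ‖∑ ω, (p ω * Q ω) • z ω‖ ^ 2) := by
  -- U f = bstar f * W f
  have hUW : ∀ f, U f = bstar f * W f := by
    intro f
    rw [hbstar]
    rw [div_mul_cancel₀ _ (hWpos f).ne']
  -- mean term
  have hmean : ∑ ω, p ω • ((Q ω - bstar (φ ω)) • z ω) = ∑ ω, (p ω * Q ω) • z ω := by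
    have h0 : ∑ ω, (p ω * bstar (φ ω)) • z ω = 0 := by
      rw [← Finset.sum_fiberwise univ φ (fun ω => (p ω * bstar (φ ω)) • z ω)]
      refine Finset.sum_eq_zero fun f _ => ?_
      have : ∀ ω ∈ univ.filter (fun ω => φ ω = f),
          (p ω * bstar (φ ω)) • z ω = bstar f • (p ω • z ω) := by
        intro ω hω
        simp only [mem_filter] at hω
        rw [hω.2, smul_smul, mul_comm]
      rw [Finset.sum_congr rfl this, ← Finset.smul_sum, hzm f, smul_zero]
    have : ∀ ω, p ω • ((Q ω - bstar (φ ω)) • z ω)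
        = (p ω * Q ω) • z ω - (p ω * bstar (φ ω)) • z ω := by
      intro ω
      rw [smul_smul, mul_sub, sub_smul]
    simp_rw [this, Finset.sum_sub_distrib, h0, sub_zero]
  -- second moment term
  have hsnd : ∑ ω, p ω * ‖(Q ω - bstar (φ ω)) • z ω‖ ^ 2
      = (∑ ω, p ω * ‖z ω‖ ^ 2 * Q ω ^ 2) - ∑ f, bstar f ^ 2 * W f := by
    have hpt : ∀ ω, p ω * ‖(Q ω - bstar (φ ω)) • z ω‖ ^ 2
        = p ω * ‖z ω‖ ^ 2 * Q ω ^ 2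
          - 2 * bstar (φ ω) * (p ω * ‖z ω‖ ^ 2 * Q ω)
          + bstar (φ ω) ^ 2 * (p ω * ‖z ω‖ ^ 2) := by
      intro ω
      rw [norm_smul, Real.norm_eq_abs, mul_pow, sq_abs]
      ring
    simp_rw [hpt, Finset.sum_add_distrib, Finset.sum_sub_distrib]
    have h1 : ∑ ω, 2 * bstar (φ ω) * (p ω * ‖z ω‖ ^ 2 * Q ω)
        = ∑ f, 2 * bstar f * U f := by
      rw [← Finset.sum_fiberwise univ φ
        (fun ω => 2 * bstar (φ ω) * (p ω * ‖z ω‖ ^ 2 * Q ω))]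
      refine Finset.sum_congr rfl fun f _ => ?_
      rw [hU, Finset.mul_sum]
      refine Finset.sum_congr rfl fun ω hω => ?_
      simp only [mem_filter] at hω
      rw [hω.2]
    have h2 : ∑ ω, bstar (φ ω) ^ 2 * (p ω * ‖z ω‖ ^ 2)
        = ∑ f, bstar f ^ 2 * W f := by
      rw [← Finset.sum_fiberwise univ φ
        (fun ω => bstar (φ ω) ^ 2 * (p ω * ‖z ω‖ ^ 2))]
      refine Finset.sum_congr rfl fun f _ => ?_
      rw [hW, Finset.mul_sum]
      refine Finset.sum_congr rfl fun ω hω => ?_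
      simp only [mem_filter] at hω
      rw [hω.2]
    rw [h1, h2]
    have h3 : ∑ f, 2 * bstar f * U f = 2 * ∑ f, bstar f ^ 2 * W f := by
      rw [Finset.mul_sum]
      refine Finset.sum_congr rfl fun f _ => ?_
      rw [hUW]; ring
    rw [h3]; ring
  rw [hmean, hsnd]; ring
end

section
/- Assume the fiberwise zero-mean condition and that W(f) > 0 for every f ∈ F, and let b*(f) = U(f)/W(f) be the optimal action-dependent baseline. Then for every baseline b : F → ℝ, Var[g(b)] − Var[g(b*)] = ∑_{f ∈ F} (b(f) − b*(f))² · W(f). -/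
/-!
Under the fiberwise zero-mean condition, `E[b(φ) • z] = 0` for every baseline `b`, so the mean
of `g(b)` does not depend on `b` and the excess variance is a difference of second moments.
These split over the fibres of `φ`; on the fibre of `f` the second moment is a quadratic in
`b f` with weights `p ω ‖z ω‖²`, minimised at the weighted mean `b* f = U f / W f` of `Q`, and a
quadratic exceeds its minimum by `(b f - b* f)² W f`.
-/

open Finset

theorem Finset.sum_smul_comp_eq_zero_of_sum_fiber_eq_zero {ι F R M : Type*} [Fintype ι]
    [Fintype F] [DecidableEq F] [Semiring R] [AddCommMonoid M] [Module R M]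
    (φ : ι → F) (v : ι → M)
    (hv : ∀ f, ∑ i ∈ univ.filter (fun i => φ i = f), v i = 0) (c : F → R) :
    ∑ i, c (φ i) • v i = 0 := by
  rw [← sum_fiberwise univ φ]
  refine sum_eq_zero fun f _ => ?_
  calc ∑ i ∈ univ.filter (fun i => φ i = f), c (φ i) • v i
      = ∑ i ∈ univ.filter (fun i => φ i = f), c f • v i :=
        sum_congr rfl fun i hi => by rw [(mem_filter.mp hi).2]
    _ = 0 := by rw [← smul_sum, hv f, smul_zero]

theorem sum_smul_sub_comp_smul_eq_of_sum_fiber_eq_zero {Ω F E : Type*} [Fintype Ω]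
    [Fintype F] [DecidableEq F] [AddCommGroup E] [Module ℝ E]
    (p : Ω → ℝ) (z : Ω → E) (Q : Ω → ℝ) (φ : Ω → F)
    (hzm : ∀ f, ∑ ω ∈ univ.filter (fun ω => φ ω = f), p ω • z ω = 0)
    (b : F → ℝ) :
    ∑ ω, p ω • ((Q ω - b (φ ω)) • z ω) = ∑ ω, p ω • (Q ω • z ω) := by
  have hbase : ∑ ω, p ω • (b (φ ω) • z ω) = 0 := by
    simp_rw [smul_comm (p _)]
    exact sum_smul_comp_eq_zero_of_sum_fiber_eq_zero φ _ hzm b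
  simp_rw [sub_smul, smul_sub, sum_sub_distrib, hbase, sub_zero]

theorem sum_mul_norm_sub_comp_smul_sq_eq_sum_fiberwise {Ω F E : Type*} [Fintype Ω] [Fintype F]
    [DecidableEq F] [SeminormedAddCommGroup E] [NormedSpace ℝ E] (p : Ω → ℝ) (z : Ω → E)
    (Q : Ω → ℝ) (φ : Ω → F) (b : F → ℝ) :
    ∑ ω, p ω * ‖(Q ω - b (φ ω)) • z ω‖ ^ 2
      = ∑ f, ∑ ω ∈ univ.filter (fun ω => φ ω = f), p ω * ‖z ω‖ ^ 2 * (Q ω - b f) ^ 2 := by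
  rw [← sum_fiberwise univ φ]
  refine sum_congr rfl fun f _ => sum_congr rfl fun ω hω => ?_
  rw [(mem_filter.mp hω).2, norm_smul, mul_pow, Real.norm_eq_abs, sq_abs]
  ring

theorem Finset.sum_mul_sub_sq_sub_sum_mul_sub_sq {ι : Type*} (s : Finset ι) (w Q : ι → ℝ)
    (b c : ℝ) (hc : c * ∑ i ∈ s, w i = ∑ i ∈ s, w i * Q i) :
    ∑ i ∈ s, w i * (Q i - b) ^ 2 - ∑ i ∈ s, w i * (Q i - c) ^ 2
      = (b - c) ^ 2 * ∑ i ∈ s, w i := by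
  calc ∑ i ∈ s, w i * (Q i - b) ^ 2 - ∑ i ∈ s, w i * (Q i - c) ^ 2
      = 2 * (c - b) * ∑ i ∈ s, w i * Q i + (b ^ 2 - c ^ 2) * ∑ i ∈ s, w i := by
        rw [← sum_sub_distrib, mul_sum, mul_sum, ← sum_add_distrib]
        exact sum_congr rfl fun i _ => by ring
    _ = (b - c) ^ 2 * ∑ i ∈ s, w i := by rw [← hc]; ring

theorem offpolicy_excess_variance_over_optimal_baseline_general
    {Ω : Type*} [Fintype Ω]
    {E : Type*} [NormedAddCommGroup E] [InnerProductSpace ℝ E]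
    {F : Type*} [Fintype F] [DecidableEq F]
    (p : Ω → ℝ)
    (z : Ω → E) (Q : Ω → ℝ) (φ : Ω → F)
    (hzm : ∀ f : F, ∑ ω ∈ univ.filter (fun ω => φ ω = f), p ω • z ω = 0)
    (W U : F → ℝ)
    (hW : ∀ f, W f = ∑ ω ∈ univ.filter (fun ω => φ ω = f), p ω * ‖z ω‖ ^ 2)
    (hU : ∀ f, U f = ∑ ω ∈ univ.filter (fun ω => φ ω = f), p ω * ‖z ω‖ ^ 2 * Q ω)
    (hWpos : ∀ f, 0 < W f)
    (bstar : F → ℝ) (hbstar : ∀ f, bstar f = U f / W f) :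
    ∀ b : F → ℝ,
      ((∑ ω, p ω * ‖(Q ω - b (φ ω)) • z ω‖ ^ 2)
          - ‖∑ ω, p ω • ((Q ω - b (φ ω)) • z ω)‖ ^ 2)
        - ((∑ ω, p ω * ‖(Q ω - bstar (φ ω)) • z ω‖ ^ 2)
          - ‖∑ ω, p ω • ((Q ω - bstar (φ ω)) • z ω)‖ ^ 2)
      = ∑ f, (b f - bstar f) ^ 2 * W f := by
  intro b
  simp only [sum_smul_sub_comp_smul_eq_of_sum_fiber_eq_zero p z Q φ hzm,
    sum_mul_norm_sub_comp_smul_sq_eq_sum_fiberwise p z Q φ, sub_sub_sub_cancel_right]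
  rw [← sum_sub_distrib]
  refine sum_congr rfl fun f _ => ?_
  have hweighted_mean : bstar f * W f = U f := by rw [hbstar, div_mul_cancel₀ _ (hWpos f).ne']
  rw [hW, hU] at hweighted_mean
  rw [hW, sum_mul_sub_sq_sub_sum_mul_sub_sq _ _ _ _ _ hweighted_mean]

/-- Lemma 1: for any baseline `b`, the excess variance over the optimal
action-dependent baseline `b*(f) = U(f)/W(f)` is
`Var[g(b)] − Var[g(b*)] = ∑ f, (b(f) − b*(f))² W(f)`. -/
theorem offpolicy_excess_variance_over_optimal_baseline
    {Ω : Type*} [Fintype Ω] [Nonempty Ω]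
    {E : Type*} [NormedAddCommGroup E] [InnerProductSpace ℝ E] [FiniteDimensional ℝ E]
    {F : Type*} [Fintype F] [DecidableEq F]
    (p : Ω → ℝ) (hp0 : ∀ ω, 0 ≤ p ω) (hp1 : ∑ ω, p ω = 1)
    (z : Ω → E) (Q : Ω → ℝ) (φ : Ω → F)
    (hzm : ∀ f : F, ∑ ω ∈ univ.filter (fun ω => φ ω = f), p ω • z ω = 0)
    (W U : F → ℝ)
    (hW : ∀ f, W f = ∑ ω ∈ univ.filter (fun ω => φ ω = f), p ω * ‖z ω‖ ^ 2)
    (hU : ∀ f, U f = ∑ ω ∈ univ.filter (fun ω => φ ω = f), p ω * ‖z ω‖ ^ 2 * Q ω)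
    (hWpos : ∀ f, 0 < W f)
    (bstar : F → ℝ) (hbstar : ∀ f, bstar f = U f / W f) :
    ∀ b : F → ℝ,
      ((∑ ω, p ω * ‖(Q ω - b (φ ω)) • z ω‖ ^ 2)
          - ‖∑ ω, p ω • ((Q ω - b (φ ω)) • z ω)‖ ^ 2)
        - ((∑ ω, p ω * ‖(Q ω - bstar (φ ω)) • z ω‖ ^ 2)
          - ‖∑ ω, p ω • ((Q ω - bstar (φ ω)) • z ω)‖ ^ 2)
      = ∑ f, (b f - bstar f) ^ 2 * W f :=
  offpolicy_excess_variance_over_optimal_baseline_general p z Q φ hzm W U hW hU hWpos bstar hbstar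
end

section
/- Assume the fiberwise zero-mean condition and that W(f) > 0 for every f ∈ F, and let b*(f) = U(f)/W(f) be the optimal action-dependent baseline. Let S be a finite type and σ : F → S (modeling the projection (s,a^{−i}) ↦ s), and define the optimal state-dependent baseline β* : S → ℝ by β*(s) = (∑_{f with σ(f)=s} U(f)) / (∑_{f with σ(f)=s} W(f)), assuming ∑_{f with σ(f)=s} W(f) > 0 for every s ∈ S. Then Var[g(β* ∘ σ)] − Var[g(b*)] = ∑_{f ∈ F} (β*(σ(f)) − b*(f))² · W(f). -/
open Finset

/-- Theorem 2 (Variance Difference between Optimal State and Action-Dependent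
Baseline): with `b*(f) = U(f)/W(f)` the optimal action-dependent baseline and
`β*(s) = (∑_{σ f = s} U f) / (∑_{σ f = s} W f)` the optimal state-dependent
baseline, `Var[g(β* ∘ σ)] − Var[g(b*)] = ∑ f, (β*(σ f) − b*(f))² W(f)`. -/
theorem offpolicy_variance_difference_state_vs_action_baseline
    {Ω : Type*} [Fintype Ω] [Nonempty Ω]
    {E : Type*} [NormedAddCommGroup E] [InnerProductSpace ℝ E] [FiniteDimensional ℝ E]
    {F : Type*} [Fintype F] [DecidableEq F]
    {S : Type*} [Fintype S] [DecidableEq S]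
    (p : Ω → ℝ) (hp0 : ∀ ω, 0 ≤ p ω) (hp1 : ∑ ω, p ω = 1)
    (z : Ω → E) (Q : Ω → ℝ) (φ : Ω → F) (σ : F → S)
    (hzm : ∀ f : F, ∑ ω ∈ univ.filter (fun ω => φ ω = f), p ω • z ω = 0)
    (W U : F → ℝ)
    (hW : ∀ f, W f = ∑ ω ∈ univ.filter (fun ω => φ ω = f), p ω * ‖z ω‖ ^ 2)
    (hU : ∀ f, U f = ∑ ω ∈ univ.filter (fun ω => φ ω = f), p ω * ‖z ω‖ ^ 2 * Q ω)
    (hWpos : ∀ f, 0 < W f)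
    (bstar : F → ℝ) (hbstar : ∀ f, bstar f = U f / W f)
    (hSWpos : ∀ s : S, 0 < ∑ f ∈ univ.filter (fun f => σ f = s), W f)
    (βstar : S → ℝ)
    (hβstar : ∀ s, βstar s =
      (∑ f ∈ univ.filter (fun f => σ f = s), U f)
        / (∑ f ∈ univ.filter (fun f => σ f = s), W f)) :
    ((∑ ω, p ω * ‖(Q ω - βstar (σ (φ ω))) • z ω‖ ^ 2)
        - ‖∑ ω, p ω • ((Q ω - βstar (σ (φ ω))) • z ω)‖ ^ 2)
      - ((∑ ω, p ω * ‖(Q ω - bstar (φ ω)) • z ω‖ ^ 2)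
        - ‖∑ ω, p ω • ((Q ω - bstar (φ ω)) • z ω)‖ ^ 2)
    = ∑ f, (βstar (σ f) - bstar f) ^ 2 * W f := by
  -- the means are equal for any fiberwise baseline
  have hzero : ∀ b : F → ℝ, ∑ ω, (b (φ ω) * p ω) • z ω = 0 := by
    intro b
    rw [← Finset.sum_fiberwise univ φ (fun ω => (b (φ ω) * p ω) • z ω)]
    apply Finset.sum_eq_zero
    intro f _
    have h1 : ∑ ω ∈ univ.filter (fun ω => φ ω = f), (b (φ ω) * p ω) • z ω
        = b f • ∑ ω ∈ univ.filter (fun ω => φ ω = f), p ω • z ω := by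
      rw [Finset.smul_sum]
      apply Finset.sum_congr rfl
      intro ω hω
      simp only [mem_filter] at hω
      rw [hω.2, mul_smul]
    rw [h1, hzm f, smul_zero]
  have hmean : ∀ b : F → ℝ, ∑ ω, p ω • ((Q ω - b (φ ω)) • z ω)
      = ∑ ω, p ω • (Q ω • z ω) := by
    intro b
    have h1 : ∀ ω, p ω • ((Q ω - b (φ ω)) • z ω)
        = p ω • (Q ω • z ω) - (b (φ ω) * p ω) • z ω := by
      intro ω
      rw [smul_smul, smul_smul,
        show p ω * (Q ω - b (φ ω)) = p ω * Q ω - b (φ ω) * p ω by ring, sub_smul]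
    simp_rw [h1]
    rw [Finset.sum_sub_distrib, hzero, sub_zero]
  -- second moment formula
  have key : ∀ b : F → ℝ, ∑ ω, p ω * ‖(Q ω - b (φ ω)) • z ω‖ ^ 2
      = ∑ f, ((b f) ^ 2 * W f - 2 * b f * U f)
        + ∑ ω, p ω * ‖z ω‖ ^ 2 * Q ω ^ 2 := by
    intro b
    have h1 : ∀ ω, p ω * ‖(Q ω - b (φ ω)) • z ω‖ ^ 2
        = ((b (φ ω)) ^ 2 * (p ω * ‖z ω‖ ^ 2)
            - 2 * b (φ ω) * (p ω * ‖z ω‖ ^ 2 * Q ω))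
          + p ω * ‖z ω‖ ^ 2 * Q ω ^ 2 := by
      intro ω
      rw [norm_smul, mul_pow, Real.norm_eq_abs, sq_abs]
      ring
    simp_rw [h1]
    rw [Finset.sum_add_distrib]
    congr 1
    rw [← Finset.sum_fiberwise univ φ
      (fun ω => (b (φ ω)) ^ 2 * (p ω * ‖z ω‖ ^ 2)
        - 2 * b (φ ω) * (p ω * ‖z ω‖ ^ 2 * Q ω))]
    apply Finset.sum_congr rfl
    intro f _
    rw [Finset.sum_sub_distrib, hW, hU, Finset.mul_sum, Finset.mul_sum]
    congr 1
    · apply Finset.sum_congr rfl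
      intro ω hω
      simp only [mem_filter] at hω
      rw [hω.2]
    · apply Finset.sum_congr rfl
      intro ω hω
      simp only [mem_filter] at hω
      rw [hω.2]
  have k1 := key (fun f => βstar (σ f))
  have k2 := key bstar
  rw [k1, k2, hmean (fun f => βstar (σ f)), hmean bstar]
  have hU' : ∀ f, U f = bstar f * W f := by
    intro f
    rw [hbstar, div_mul_cancel₀ _ (hWpos f).ne']
  have : (∑ f, ((βstar (σ f)) ^ 2 * W f - 2 * βstar (σ f) * U f))
      - (∑ f, ((bstar f) ^ 2 * W f - 2 * bstar f * U f))
      = ∑ f, (βstar (σ f) - bstar f) ^ 2 * W f := by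
    rw [← Finset.sum_sub_distrib]
    apply Finset.sum_congr rfl
    intro f _
    rw [hU' f]
    ring
  linarith [this]
end

section
/- Assume the fiberwise zero-mean condition and that W(f) > 0 for every f ∈ F, and let b*(f) = U(f)/W(f) be the optimal action-dependent baseline. Let S be a finite type and σ : F → S (modeling the projection (s,a^{−i}) ↦ s). Then for every state-dependent baseline β : S → ℝ, Var[g(b*)] ≤ Var[g(β ∘ σ)]; that is, the optimal action-dependent baseline achieves variance at most that of any state-dependent baseline, in particular at most that of the optimal state-dependent baseline. -/
open Finset

/-- Variance-reduction corollary of Theorem 2: the optimal action-dependent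
baseline `b*(f) = U(f)/W(f)` achieves variance at most that of any
state-dependent baseline `β ∘ σ`. -/
theorem offpolicy_action_baseline_beats_state_baseline
    {Ω : Type*} [Fintype Ω] [Nonempty Ω]
    {E : Type*} [NormedAddCommGroup E] [InnerProductSpace ℝ E] [FiniteDimensional ℝ E]
    {F : Type*} [Fintype F] [DecidableEq F]
    {S : Type*} [Fintype S]
    (p : Ω → ℝ) (hp0 : ∀ ω, 0 ≤ p ω) (hp1 : ∑ ω, p ω = 1)
    (z : Ω → E) (Q : Ω → ℝ) (φ : Ω → F) (σ : F → S)
    (hzm : ∀ f : F, ∑ ω ∈ univ.filter (fun ω => φ ω = f), p ω • z ω = 0)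
    (W U : F → ℝ)
    (hW : ∀ f, W f = ∑ ω ∈ univ.filter (fun ω => φ ω = f), p ω * ‖z ω‖ ^ 2)
    (hU : ∀ f, U f = ∑ ω ∈ univ.filter (fun ω => φ ω = f), p ω * ‖z ω‖ ^ 2 * Q ω)
    (hWpos : ∀ f, 0 < W f)
    (bstar : F → ℝ) (hbstar : ∀ f, bstar f = U f / W f) :
    ∀ β : S → ℝ,
      (∑ ω, p ω * ‖(Q ω - bstar (φ ω)) • z ω‖ ^ 2)
          - ‖∑ ω, p ω • ((Q ω - bstar (φ ω)) • z ω)‖ ^ 2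
        ≤ (∑ ω, p ω * ‖(Q ω - β (σ (φ ω))) • z ω‖ ^ 2)
          - ‖∑ ω, p ω • ((Q ω - β (σ (φ ω))) • z ω)‖ ^ 2 := by
  intro β
  -- The mean is independent of the baseline.
  have hmean : ∀ b : F → ℝ,
      ∑ ω, p ω • ((Q ω - b (φ ω)) • z ω) = ∑ ω, p ω • (Q ω • z ω) := by
    intro b
    have h1 : ∀ ω, p ω • ((Q ω - b (φ ω)) • z ω)
        = p ω • (Q ω • z ω) - b (φ ω) • (p ω • z ω) := by
      intro ω
      rw [sub_smul, smul_sub, smul_comm (b (φ ω))]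
    simp only [h1, Finset.sum_sub_distrib]
    have h2 : ∑ ω, b (φ ω) • (p ω • z ω) = 0 := by
      rw [← Finset.sum_fiberwise (univ : Finset Ω) φ (fun ω => b (φ ω) • (p ω • z ω))]
      refine Finset.sum_eq_zero fun f _ => ?_
      have : ∑ ω ∈ univ.filter (fun ω => φ ω = f), b (φ ω) • (p ω • z ω)
          = b f • ∑ ω ∈ univ.filter (fun ω => φ ω = f), p ω • z ω := by
        rw [Finset.smul_sum]
        refine Finset.sum_congr rfl fun ω hω => ?_
        rw [Finset.mem_filter] at hω
        rw [hω.2]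
      rw [this, hzm f, smul_zero]
    rw [h2, sub_zero]
  -- Second moment of baseline b, fiberwise.
  have hsq : ∀ b : F → ℝ,
      ∑ ω, p ω * ‖(Q ω - b (φ ω)) • z ω‖ ^ 2
        = ∑ f, ∑ ω ∈ univ.filter (fun ω => φ ω = f),
            p ω * ‖z ω‖ ^ 2 * (Q ω - b f) ^ 2 := by
    intro b
    have h1 : ∑ ω, p ω * ‖(Q ω - b (φ ω)) • z ω‖ ^ 2
        = ∑ ω, p ω * ‖z ω‖ ^ 2 * (Q ω - b (φ ω)) ^ 2 := by
      refine Finset.sum_congr rfl fun ω _ => ?_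
      rw [norm_smul]
      simp [mul_pow, sq_abs]
      ring
    rw [h1, ← Finset.sum_fiberwise (univ : Finset Ω) φ
      (fun ω => p ω * ‖z ω‖ ^ 2 * (Q ω - b (φ ω)) ^ 2)]
    refine Finset.sum_congr rfl fun f _ => Finset.sum_congr rfl fun ω hω => ?_
    rw [Finset.mem_filter] at hω
    rw [hω.2]
  -- Per-fiber quadratic expansion.
  have hexp : ∀ (b : F → ℝ) (f : F),
      ∑ ω ∈ univ.filter (fun ω => φ ω = f), p ω * ‖z ω‖ ^ 2 * (Q ω - b f) ^ 2
        = (∑ ω ∈ univ.filter (fun ω => φ ω = f), p ω * ‖z ω‖ ^ 2 * Q ω ^ 2)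
          - 2 * b f * U f + b f ^ 2 * W f := by
    intro b f
    rw [hU, hW, Finset.mul_sum, Finset.mul_sum, ← Finset.sum_sub_distrib,
      ← Finset.sum_add_distrib]
    refine Finset.sum_congr rfl fun ω _ => ?_
    ring
  rw [hmean bstar, hmean (fun f => β (σ f)), hsq bstar, hsq (fun f => β (σ f))]
  apply sub_le_sub_right
  refine Finset.sum_le_sum fun f _ => ?_
  rw [hexp bstar f, hexp (fun f => β (σ f)) f]
  have hw := hWpos f
  have key : 0 ≤ (W f * β (σ f) - U f) ^ 2 / W f := by positivity
  have hb : bstar f = U f / W f := hbstar f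
  have hbW : bstar f * W f = U f := ((div_eq_iff (ne_of_gt hw)).mp hb.symm).symm
  nlinarith [mul_nonneg hw.le (sq_nonneg (β (σ f) - bstar f)), hbW]
end
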